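/- Let X be a real Hilbert space, let A and B be closed subsets of X, and let x̄ ∈ A ∩ B. If A and B satisfy property (LT) at x̄, then A and B satisfy property (P) at x̄. -/

import Mathlib

open Metric Set
open scoped ENNReal

/-- Property (LT) of closed sets `A`, `B` at a point `x0 ∈ A ∩ B`. -/
def PropLT {X : Type*} [MetricSpace X] (A B : Set X) (x0 : X) : Prop :=
  ∃ ε > 0, ∃ θ > 0,
    ∀ xA ∈ Metric.closedBall x0 ε ∩ (A \ B), ∀ xB ∈ Metric.closedBall x0 ε ∩ (B \ A),
      xA ≠ xB →
      ∃ t : ℕ → ℝ, ∃ xa : ℕ → X, ∃ xb : ℕ → X,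
        (∀ m, 0 < t m) ∧ Filter.Tendsto t Filter.atTop (nhds 0) ∧
        (∀ m, xa m ∈ A) ∧ (∀ m, xb m ∈ B) ∧
        ∀ m, dist (xa m) xA ≤ t m ∧ dist (xb m) xB ≤ t m ∧
          dist (xa m) (xb m) ≤ dist xA xB - t m * θ

/-- `tripleDist A B Ω = inf_{x ∈ Ω, a ∈ A, b ∈ B} max{‖x - a‖, ‖x - b‖}`,
with the convention that the infimum over the empty set is `+∞`. -/
noncomputable def tripleDist {X : Type*} [NormedAddCommGroup X] (A B Ω : Set X) : ℝ≥0∞ :=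
  ⨅ x ∈ Ω, ⨅ a ∈ A, ⨅ b ∈ B, ENNReal.ofReal (max ‖x - a‖ ‖x - b‖)

/-- Property (P) of closed sets `A`, `B` at a point `x0 ∈ A ∩ B`. -/
def PropP {X : Type*} [NormedAddCommGroup X] (A B : Set X) (x0 : X) : Prop :=
  ∃ α : ℝ, 0 < α ∧ α < 1 ∧ ∃ ε > 0,
    ∀ a ∈ (A \ B) ∩ Metric.ball x0 ε, ∀ b ∈ (B \ A) ∩ Metric.ball x0 ε,
      ∀ x ∈ Metric.ball x0 ε, ‖x - a‖ = ‖x - b‖ →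
        ∀ δ > 0, ∃ ρ : ℝ, 0 < ρ ∧ ρ < δ ∧
          tripleDist (A ∩ Metric.ball a ((α + 1 / Real.sqrt ε) * ρ))
              (B ∩ Metric.ball b ((α + 1 / Real.sqrt ε) * ρ))
              (Metric.ball x ρ) +
            ENNReal.ofReal (α * ρ) ≤ ENNReal.ofReal ‖x - a‖

/-!
Let `a ∈ A \ B` and `b ∈ B \ A` be near `x̄`, let `x` be at distance `r` from both, and let `m` be
the midpoint of `[a, b]`. If `‖x - m‖ ≥ 2αr`, moving `x` towards `m` keeps it on the perpendicular
bisector of `[a, b]`, and Pythagoras shows that its distance to `a` and `b` drops at a linear rate.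

If `‖x - m‖ < 2αr`, then `‖a - b‖ ≈ 2r` and one must bring the two sets closer instead. Ekeland's
variational principle, applied to `(u, v) ↦ ‖u - v‖` on `A × B` near `(a, b)`, gives a pair that no
other pair improves by more than `θ` times its displacement. Pairs close to `(a, b)` still lie in
`(A \ B) × (B \ A)` (the sets are closed), so (LT) improves them; hence the Ekeland pair `(u, v)`
is at distance at least `R` from `(a, b)` and `‖u - v‖ ≤ ‖a - b‖ - θR`. By Apollonius's theorem `x`
is then closer to `u` or to `v` than to `a` and `b` by a definite amount, and moving `x` slightly
towards `b` (resp. `a`) gives the witness for (P).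
-/

open Filter Topology

section Ekeland

variable {Y : Type*} [MetricSpace Y] {S : Set Y} {f : Y → ℝ} {θ : ℝ} {y z : Y}

def ekelandSet (S : Set Y) (f : Y → ℝ) (θ : ℝ) (y : Y) : Set Y :=
  {z ∈ S | f z + θ * dist y z ≤ f y}

lemma mem_ekelandSet_self (hy : y ∈ S) : y ∈ ekelandSet S f θ y :=
  ⟨hy, by simp⟩

lemma ekelandSet_subset_of_mem (hθ : 0 ≤ θ) (hz : z ∈ ekelandSet S f θ y) :
    ekelandSet S f θ z ⊆ ekelandSet S f θ y := by
  intro w hw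
  refine ⟨hw.1, ?_⟩
  have := mul_le_mul_of_nonneg_left (dist_triangle y z w) hθ
  linarith [hz.2, hw.2]

lemma isClosed_ekelandSet (hS : IsClosed S) (hf : LowerSemicontinuous f) (θ : ℝ) (y : Y) :
    IsClosed (ekelandSet S f θ y) := by
  have hdist : Continuous fun z => θ * dist y z :=
    continuous_const.mul (continuous_const.dist continuous_id)
  exact hS.inter <| (hf.add hdist.lowerSemicontinuous).isClosed_preimage (f y)

lemma mul_dist_le_of_mem_ekelandSet (hbdd : BddBelow (f '' S)) (hz : z ∈ ekelandSet S f θ y) :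
    θ * dist y z ≤ f y - sInf (f '' ekelandSet S f θ y) := by
  have := csInf_le (hbdd.mono (image_mono fun _ hw => hw.1)) (mem_image_of_mem f hz)
  linarith [hz.2]

lemma exists_mem_ekelandSet_two_mul_le (hy : y ∈ S) :
    ∃ z ∈ ekelandSet S f θ y, 2 * f z ≤ f y + sInf (f '' ekelandSet S f θ y) := by
  by_cases h : sInf (f '' ekelandSet S f θ y) < f y
  · obtain ⟨_, ⟨z, hz, rfl⟩, hlt⟩ := exists_lt_of_csInf_lt
      ((nonempty_of_mem (mem_ekelandSet_self hy)).image f) (left_lt_add_div_two.2 h)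
    exact ⟨z, hz, by linarith⟩
  · exact ⟨y, mem_ekelandSet_self hy, by linarith [not_lt.1 h]⟩

lemma sub_sInf_ekelandSet_le_half (hbdd : BddBelow (f '' S)) (hθ : 0 ≤ θ)
    (hz : z ∈ ekelandSet S f θ y) (hfz : 2 * f z ≤ f y + sInf (f '' ekelandSet S f θ y)) :
    f z - sInf (f '' ekelandSet S f θ z) ≤ (f y - sInf (f '' ekelandSet S f θ y)) / 2 := by
  have : sInf (f '' ekelandSet S f θ y) ≤ sInf (f '' ekelandSet S f θ z) :=
    csInf_le_csInf (hbdd.mono (image_mono fun _ hw => hw.1))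
      ((nonempty_of_mem (mem_ekelandSet_self hz.1)).image f)
      (image_mono (ekelandSet_subset_of_mem hθ hz))
  linarith

/-- Ekeland's variational principle. -/
theorem exists_ekelandSet_eq_singleton [CompleteSpace Y] (hS : IsClosed S)
    (hf : LowerSemicontinuous f) (hbdd : BddBelow (f '' S)) (hθ : 0 < θ) {y₀ : Y}
    (hy₀ : y₀ ∈ S) :
    ∃ z ∈ ekelandSet S f θ y₀, ekelandSet S f θ z = {z} := by
  set E := ekelandSet S f θ
  set gap : Y → ℝ := fun y => f y - sInf (f '' E y)
  choose! step hstep hstep_le using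
    fun y (hy : y ∈ S) => exists_mem_ekelandSet_two_mul_le (θ := θ) hy
  set y : ℕ → Y := fun n => step^[n] y₀
  have hy_succ (n : ℕ) : y (n + 1) = step (y n) := Function.iterate_succ_apply' step n y₀
  have hyS (n : ℕ) : y n ∈ S := by
    induction n with
    | zero => exact hy₀
    | succ n ih => rw [hy_succ]; exact (hstep _ ih).1
  have hyE (n : ℕ) : y (n + 1) ∈ E (y n) := hy_succ n ▸ hstep _ (hyS n)
  have hanti : Antitone fun n => E (y n) :=
    antitone_nat_of_succ_le fun n => ekelandSet_subset_of_mem hθ.le (hyE n)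
  have hgap (n : ℕ) : gap (y n) ≤ gap y₀ * (1 / 2) ^ n := by
    induction n with
    | zero => simp [y]
    | succ n ih =>
      have := sub_sInf_ekelandSet_le_half hbdd hθ.le (hyE n) (hy_succ n ▸ hstep_le _ (hyS n))
      simp only [gap, pow_succ] at ih ⊢
      linarith
  have hclose (n : ℕ) (w : Y) (hw : w ∈ E (y n)) : dist (y n) w ≤ gap y₀ / θ * (1 / 2) ^ n := by
    rw [div_mul_eq_mul_div, le_div_iff₀ hθ, mul_comm]
    exact (mul_dist_le_of_mem_ekelandSet hbdd hw).trans (hgap n)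
  obtain ⟨z, hz⟩ := cauchySeq_tendsto_of_complete <|
    cauchySeq_of_le_geometric (1 / 2) (gap y₀ / θ) (by norm_num) fun n => hclose n _ (hyE n)
  have hzE (n : ℕ) : z ∈ E (y n) :=
    (isClosed_ekelandSet hS hf θ _).mem_of_tendsto hz <|
      eventually_atTop.2 ⟨n, fun m hm => hanti hm (mem_ekelandSet_self (hyS m))⟩
  refine ⟨z, hzE 0, subset_antisymm (fun w hw => ?_)
    (singleton_subset_iff.2 (mem_ekelandSet_self (hzE 0).1))⟩
  have hgeom : Tendsto (fun n => gap y₀ / θ * (1 / 2 : ℝ) ^ n) atTop (𝓝 0) := by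
    simpa using (tendsto_pow_atTop_nhds_zero_of_lt_one (r := (1 / 2 : ℝ)) (by norm_num)
      (by norm_num)).const_mul (gap y₀ / θ)
  have hw_lim : Tendsto y atTop (𝓝 w) := tendsto_iff_dist_tendsto_zero.2 <|
    squeeze_zero (fun _ => dist_nonneg)
      (fun n => hclose n w (ekelandSet_subset_of_mem hθ.le (hzE n) hw)) hgeom
  exact tendsto_nhds_unique hw_lim hz

end Ekeland

def HasDescent {X : Type*} [MetricSpace X] (A B : Set X) (θ : ℝ) (u v : X) : Prop :=
  ∀ τ > 0, ∃ t, 0 < t ∧ t < τ ∧ ∃ u' ∈ A, ∃ v' ∈ B,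
    dist u' u ≤ t ∧ dist v' v ≤ t ∧ dist u' v' ≤ dist u v - t * θ

lemma PropLT.exists_hasDescent {X : Type*} [MetricSpace X] {A B : Set X} {x₀ : X}
    (h : PropLT A B x₀) :
    ∃ ε > 0, ∃ θ > 0, ∀ u ∈ closedBall x₀ ε ∩ (A \ B), ∀ v ∈ closedBall x₀ ε ∩ (B \ A),
      HasDescent A B θ u v := by
  obtain ⟨ε, hε, θ, hθ, hLT⟩ := h
  refine ⟨ε, hε, θ, hθ, fun u hu v hv τ hτ => ?_⟩
  obtain ⟨t, u', v', ht, ht0, hu', hv', hdist⟩ :=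
    hLT u hu v hv fun huv => hu.2.2 (huv ▸ hv.2.1)
  obtain ⟨m, hm⟩ := (ht0.eventually (gt_mem_nhds hτ)).exists
  exact ⟨t m, ht m, hm, u' m, hu' m, v' m, hv' m, hdist m⟩

theorem exists_pair_dist_add_le_of_hasDescent {X : Type*} [MetricSpace X] [CompleteSpace X]
    {A B : Set X} (hA : IsClosed A) (hB : IsClosed B) {a b : X} (ha : a ∈ A) (hb : b ∈ B)
    {θ R : ℝ} (hθ : 0 < θ) (hR : 0 ≤ R)
    (hdesc : ∀ u ∈ A, ∀ v ∈ B, dist u a < R → dist v b < R → HasDescent A B θ u v) :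
    ∃ u ∈ A ∩ closedBall a (2 * R), ∃ v ∈ B ∩ closedBall b (2 * R),
      dist u v + θ * R ≤ dist a b := by
  set S := (A ∩ closedBall a (2 * R)) ×ˢ (B ∩ closedBall b (2 * R))
  have hS : IsClosed S := (hA.inter isClosed_closedBall).prod (hB.inter isClosed_closedBall)
  have hbdd : BddBelow ((fun p : X × X => dist p.1 p.2) '' S) :=
    ⟨0, by rintro _ ⟨p, -, rfl⟩; exact dist_nonneg⟩
  obtain ⟨⟨u, v⟩, ⟨⟨⟨huA, hu⟩, hvB, hv⟩, hle⟩, hmin⟩ :=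
    exists_ekelandSet_eq_singleton hS continuous_dist.lowerSemicontinuous hbdd hθ
      (y₀ := (a, b)) ⟨⟨ha, by simpa using hR⟩, hb, by simpa using hR⟩
  refine ⟨u, ⟨huA, hu⟩, v, ⟨hvB, hv⟩, ?_⟩
  by_cases hfar : R ≤ dist (a, b) (u, v)
  · linarith [mul_le_mul_of_nonneg_left hfar hθ.le]
  rw [Prod.dist_eq, le_max_iff, not_or, not_le, not_le] at hfar
  obtain ⟨t, ht, htR, u', hu'A, v', hv'B, hu', hv', hdist⟩ :=
    hdesc u huA v hvB (by rw [dist_comm]; exact hfar.1) (by rw [dist_comm]; exact hfar.2) R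
      (dist_nonneg.trans_lt hfar.1)
  have hmem : (u', v') ∈ ekelandSet S (fun p : X × X => dist p.1 p.2) θ (u, v) := by
    refine ⟨⟨⟨hu'A, ?_⟩, hv'B, ?_⟩, ?_⟩
    · rw [mem_closedBall] at hu ⊢; linarith [dist_triangle u' u a, dist_comm a u]
    · rw [mem_closedBall] at hv ⊢; linarith [dist_triangle v' v b, dist_comm b v]
    · have : dist (u, v) (u', v') ≤ t := by
        rw [Prod.dist_eq, dist_comm u, dist_comm v]; exact max_le hu' hv'
      dsimp only
      linarith [mul_le_mul_of_nonneg_left this hθ.le]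
  rw [hmin, mem_singleton_iff, Prod.mk.injEq] at hmem
  obtain ⟨rfl, rfl⟩ := hmem
  linarith [mul_pos ht hθ]

/-- The witness required by (P) at the scale `ρ`, with `M` standing for `α + 1 / √ε`. -/
def HasCloserPoint {X : Type*} [MetricSpace X] (A B : Set X) (α M ρ : ℝ) (a b x : X) : Prop :=
  ∃ y ∈ ball x ρ, ∃ a' ∈ A ∩ ball a (M * ρ), ∃ b' ∈ B ∩ ball b (M * ρ),
    dist y a' + α * ρ ≤ dist x a ∧ dist y b' + α * ρ ≤ dist x a

lemma tripleDist_add_ofReal_le {X : Type*} [NormedAddCommGroup X] {A B Ω : Set X} {x a b : X}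
    {s r : ℝ} (hx : x ∈ Ω) (ha : a ∈ A) (hb : b ∈ B) (hs : 0 ≤ s) (hxa : dist x a + s ≤ r)
    (hxb : dist x b + s ≤ r) :
    tripleDist A B Ω + ENNReal.ofReal s ≤ ENNReal.ofReal r := by
  have hmax : tripleDist A B Ω ≤ ENNReal.ofReal (max ‖x - a‖ ‖x - b‖) :=
    (iInf₂_le x hx).trans <| (iInf₂_le a ha).trans <| iInf₂_le b hb
  rw [← dist_eq_norm, ← dist_eq_norm] at hmax
  calc tripleDist A B Ω + ENNReal.ofReal s
      ≤ ENNReal.ofReal (max (dist x a) (dist x b)) + ENNReal.ofReal s := by gcongr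
    _ = ENNReal.ofReal (max (dist x a) (dist x b) + s) :=
      (ENNReal.ofReal_add (le_max_of_le_left dist_nonneg) hs).symm
    _ ≤ ENNReal.ofReal r :=
      ENNReal.ofReal_le_ofReal (by rw [← max_add_add_right]; exact max_le hxa hxb)

lemma propP_of_forall_exists_hasCloserPoint {X : Type*} [NormedAddCommGroup X] {A B : Set X}
    {x₀ : X} {α ε : ℝ} (hα : 0 < α) (hα1 : α < 1) (hε : 0 < ε)
    (h : ∀ a ∈ (A \ B) ∩ ball x₀ ε, ∀ b ∈ (B \ A) ∩ ball x₀ ε, ∀ x : X, dist x a = dist x b →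
      ∀ δ > 0, ∃ ρ ∈ Ioo 0 δ, HasCloserPoint A B α (α + 1 / √ε) ρ a b x) :
    PropP A B x₀ := by
  refine ⟨α, hα, hα1, ε, hε, fun a ha b hb x _ hxab δ hδ => ?_⟩
  simp only [← dist_eq_norm] at hxab ⊢
  obtain ⟨ρ, ⟨hρ, hρδ⟩, y, hy, a', ha', b', hb', hya, hyb⟩ := h a ha b hb x hxab δ hδ
  exact ⟨ρ, hρ, hρδ, tripleDist_add_ofReal_le hy ha' hb' (by positivity) hya hyb⟩

lemma dist_pos_of_dist_eq_of_ne {X : Type*} [MetricSpace X] {a b x : X} (hab : a ≠ b)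
    (h : dist x a = dist x b) : 0 < dist x a :=
  dist_nonneg.lt_of_ne fun h0 =>
    hab ((dist_eq_zero.1 h0.symm).symm.trans (dist_eq_zero.1 (h ▸ h0.symm)))

lemma eventually_mul_lt (c : ℝ) {K : ℝ} (hK : 0 < K) : ∀ᶠ ρ in 𝓝[>] (0 : ℝ), c * ρ < K := by
  have : Tendsto (fun ρ => c * ρ) (𝓝 0) (𝓝 0) := by
    simpa using (continuous_const_mul c).tendsto 0
  exact (this.eventually (eventually_lt_nhds hK)).filter_mono nhdsWithin_le_nhds

lemma exists_mem_ball_dist_add_half_le {X : Type*} [NormedAddCommGroup X] [NormedSpace ℝ X]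
    {x p q : X} {ρ : ℝ} (hq : dist x q ≤ dist x p - ρ) (hρ : 0 < ρ) :
    ∃ y ∈ ball x ρ, dist y p + ρ / 2 ≤ dist x p ∧ dist y q + ρ / 2 ≤ dist x p := by
  have hr : 0 < dist x p := by linarith [dist_nonneg (x := x) (y := q)]
  set y := AffineMap.lineMap x p (ρ / (2 * dist x p))
  have hyx : dist y x = ρ / 2 := by
    rw [dist_lineMap_left, Real.norm_of_nonneg (by positivity)]
    field_simp
  have hyp : dist y p = dist x p - ρ / 2 := by
    rw [dist_lineMap_right, Real.norm_of_nonneg]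
    · field_simp
    · rw [sub_nonneg, div_le_one (by positivity)]; linarith [dist_nonneg (x := x) (y := q)]
  refine ⟨y, by rw [mem_ball, hyx]; linarith, by linarith, ?_⟩
  linarith [dist_triangle y x q]

section InnerProductSpace

variable {X : Type*} [NormedAddCommGroup X] [InnerProductSpace ℝ X]

lemma dist_sq_eq_dist_midpoint_sq_add {a b y : X} (h : dist y a = dist y b) :
    dist y a ^ 2 = dist y (midpoint ℝ a b) ^ 2 + (dist a b / 2) ^ 2 := by
  have := EuclideanGeometry.dist_sq_add_dist_sq_eq_two_mul_dist_midpoint_sq_add_half_dist_sq y a b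
  rw [← h] at this
  linarith

lemma min_dist_sq_le (x a b u v : X) {R : ℝ} (hu : dist u a ≤ R) (hv : dist v b ≤ R) :
    min (dist x u) (dist x v) ^ 2 ≤ (dist x (midpoint ℝ a b) + R) ^ 2 + (dist u v / 2) ^ 2 := by
  have hapol :=
    EuclideanGeometry.dist_sq_add_dist_sq_eq_two_mul_dist_midpoint_sq_add_half_dist_sq x u v
  have hmid : dist x (midpoint ℝ u v) ≤ dist x (midpoint ℝ a b) + R := by
    have := dist_midpoint_midpoint_le a b u v
    linarith [dist_triangle x (midpoint ℝ a b) (midpoint ℝ u v), dist_comm a u, dist_comm b v]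
  have hmin := le_min (dist_nonneg (x := x) (y := u)) (dist_nonneg (x := x) (y := v))
  have hu' := pow_le_pow_left₀ hmin (min_le_left (dist x u) (dist x v)) 2
  have hv' := pow_le_pow_left₀ hmin (min_le_right (dist x u) (dist x v)) 2
  have := pow_le_pow_left₀ dist_nonneg hmid 2
  linarith

lemma exists_mem_ball_dist_add_le_of_le_dist_midpoint {a b x : X} {α ρ : ℝ}
    (hxab : dist x a = dist x b) (hα : α ≤ 1)
    (hfar : 2 * α * dist x a ≤ dist x (midpoint ℝ a b)) (hρ : 0 < ρ) (hρr : ρ ≤ α * dist x a) :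
    ∃ y ∈ ball x ρ, dist y a + α * ρ ≤ dist x a ∧ dist y b + α * ρ ≤ dist x a := by
  set r := dist x a
  set m := midpoint ℝ a b
  set D := dist x m
  have hr : 0 ≤ r := dist_nonneg
  have hα : 0 < α := by nlinarith
  have hD : 2 * ρ ≤ D := by nlinarith
  have hD0 : 0 < D := by linarith
  set y := AffineMap.lineMap x m (3 * ρ / (4 * D))
  have hyx : dist y x = 3 * ρ / 4 := by
    rw [dist_lineMap_left, Real.norm_of_nonneg (by positivity)]
    change 3 * ρ / (4 * D) * D = _
    field_simp
  have hym : dist y m = D - 3 * ρ / 4 := by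
    rw [dist_lineMap_right, Real.norm_of_nonneg]
    · field_simp; ring
    · rw [sub_nonneg, div_le_one (by positivity)]; linarith
  have hyab : dist y a = dist y b := by
    rw [← AffineSubspace.mem_perpBisector_iff_dist_eq]
    exact AffineMap.lineMap_mem _ (AffineSubspace.mem_perpBisector_iff_dist_eq.2 hxab)
      (AffineSubspace.midpoint_mem_perpBisector a b)
  have hya : dist y a + α * ρ ≤ r := by
    have h1 : r ^ 2 = D ^ 2 + (dist a b / 2) ^ 2 := dist_sq_eq_dist_midpoint_sq_add hxab
    have h2 := dist_sq_eq_dist_midpoint_sq_add hyab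
    rw [hym] at h2
    have h3 : dist y a ^ 2 ≤ (r - α * ρ) ^ 2 := by
      nlinarith [mul_le_mul_of_nonneg_left hfar hρ.le, mul_le_mul_of_nonneg_left hρr hρ.le,
        mul_pos hα hρ]
    have := (pow_le_pow_iff_left₀ dist_nonneg (by nlinarith) two_ne_zero).1 h3
    linarith
  exact ⟨y, by rw [mem_ball, hyx]; linarith, hya, hyab ▸ hya⟩

lemma min_dist_le_sub_of_near_midpoint {a b x u v : X} {θ R ρ : ℝ} (hxab : dist x a = dist x b)
    (hθ : 0 < θ) (hD : 16 * dist x (midpoint ℝ a b) ≤ θ * dist x a)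
    (hD' : 2 * dist x (midpoint ℝ a b) ≤ dist x a) (hρR : 8 * ρ ≤ θ * R)
    (hRr : (16 + θ ^ 2) * R ≤ θ * dist x a) (hu : dist u a ≤ 2 * R) (hv : dist v b ≤ 2 * R)
    (huv : dist u v + θ * R ≤ dist a b) :
    min (dist x u) (dist x v) ≤ dist x a - ρ := by
  set r := dist x a
  set D := dist x (midpoint ℝ a b)
  set c := dist a b
  have hr : 0 ≤ r := dist_nonneg
  have hR : 0 ≤ R := by linarith [dist_nonneg (x := u) (y := a)]
  have hpyth : r ^ 2 = D ^ 2 + (c / 2) ^ 2 := dist_sq_eq_dist_midpoint_sq_add hxab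
  have hc : 3 * r ≤ 2 * c := by
    have : (3 * r) ^ 2 ≤ (2 * c) ^ 2 := by nlinarith [dist_nonneg (x := x) (y := midpoint ℝ a b)]
    exact (pow_le_pow_iff_left₀ (by positivity) (by positivity) two_ne_zero).1 this
  have huv' : (dist u v / 2) ^ 2 ≤ ((c - θ * R) / 2) ^ 2 :=
    pow_le_pow_left₀ (by positivity) (by linarith) 2
  have hρr : 8 * ρ ≤ r := by nlinarith
  have key : (D + 2 * R) ^ 2 + ((c - θ * R) / 2) ^ 2 ≤ (r - ρ) ^ 2 := by
    linarith [mul_le_mul_of_nonneg_right hD hR, mul_le_mul_of_nonneg_right hc (mul_nonneg hθ.le hR),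
      mul_le_mul_of_nonneg_right hρR hr, mul_le_mul_of_nonneg_right hRr hR, sq_nonneg ρ]
  refine (pow_le_pow_iff_left₀ (le_min dist_nonneg dist_nonneg) (by linarith) two_ne_zero).1 ?_
  linarith [min_dist_sq_le x a b u v hu hv]

theorem exists_hasCloserPoint_of_le_dist_midpoint {A B : Set X} {a b x : X} (ha : a ∈ A)
    (hb : b ∈ B) (hab : a ≠ b) (hxab : dist x a = dist x b) {α M δ : ℝ} (hα : 0 < α)
    (hα1 : α ≤ 1) (hM : 0 < M) (hfar : 2 * α * dist x a ≤ dist x (midpoint ℝ a b)) (hδ : 0 < δ) :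
    ∃ ρ ∈ Ioo 0 δ, HasCloserPoint A B α M ρ a b x := by
  have hr := dist_pos_of_dist_eq_of_ne hab hxab
  obtain ⟨ρ, hρ, hρ'⟩ := exists_between (lt_min hδ (mul_pos hα hr))
  obtain ⟨y, hy, hya, hyb⟩ := exists_mem_ball_dist_add_le_of_le_dist_midpoint hxab hα1 hfar hρ
    (hρ'.trans_le (min_le_right _ _)).le
  exact ⟨ρ, ⟨hρ, hρ'.trans_le (min_le_left _ _)⟩, y, hy, a, ⟨ha, mem_ball_self (by positivity)⟩,
    b, ⟨hb, mem_ball_self (by positivity)⟩, hya, hyb⟩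

theorem exists_hasCloserPoint_of_dist_midpoint_lt [CompleteSpace X] {A B : Set X}
    (hA : IsClosed A) (hB : IsClosed B) {x₀ : X} {ε₀ θ α M : ℝ} (hθ : 0 < θ) (hαθ : α ≤ θ / 32)
    (hα : α ≤ 1 / 4) (hθM : 32 ≤ θ * M)
    (hdesc : ∀ u ∈ closedBall x₀ ε₀ ∩ (A \ B), ∀ v ∈ closedBall x₀ ε₀ ∩ (B \ A),
      HasDescent A B θ u v)
    {a b x : X} (ha : a ∈ A \ B) (hb : b ∈ B \ A) (ha₀ : dist a x₀ < ε₀) (hb₀ : dist b x₀ < ε₀)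
    (hxab : dist x a = dist x b) (hnear : dist x (midpoint ℝ a b) < 2 * α * dist x a)
    {δ : ℝ} (hδ : 0 < δ) :
    ∃ ρ ∈ Ioo 0 δ, HasCloserPoint A B α M ρ a b x := by
  have hM : 0 < M := pos_of_mul_pos_right (by linarith) hθ.le
  have hr : 0 < dist x a := dist_pos_of_dist_eq_of_ne (fun h => ha.2 (h ▸ hb.1)) hxab
  have hD : 16 * dist x (midpoint ℝ a b) ≤ θ * dist x a := by nlinarith
  have hD' : 2 * dist x (midpoint ℝ a b) ≤ dist x a := by nlinarith
  have haB : 0 < infDist a B := (hB.notMem_iff_infDist_pos ⟨b, hb.1⟩).1 ha.2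
  have hbA : 0 < infDist b A := (hA.notMem_iff_infDist_pos ⟨a, ha.1⟩).1 hb.2
  obtain ⟨ρ, hρδ, hρa, hρb, hρa₀, hρb₀, hρr, hρ⟩ : ∃ ρ, 1 * ρ < δ ∧ M / 4 * ρ < infDist a B ∧
      M / 4 * ρ < infDist b A ∧ M / 4 * ρ < ε₀ - dist a x₀ ∧ M / 4 * ρ < ε₀ - dist b x₀ ∧
      (16 + θ ^ 2) * (M / 4) * ρ < θ * dist x a ∧ 0 < ρ :=
    ((eventually_mul_lt _ hδ).and <| (eventually_mul_lt _ haB).and <|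
      (eventually_mul_lt _ hbA).and <| (eventually_mul_lt _ (sub_pos.2 ha₀)).and <|
      (eventually_mul_lt _ (sub_pos.2 hb₀)).and <| (eventually_mul_lt _ (by positivity)).and
      self_mem_nhdsWithin).exists
  obtain ⟨u, ⟨huA, hu⟩, v, ⟨hvB, hv⟩, huv⟩ :=
    exists_pair_dist_add_le_of_hasDescent hA hB ha.1 hb.1 hθ (R := M / 4 * ρ) (by positivity)
      fun u hu v hv hua hvb => hdesc
        u ⟨mem_closedBall.2 (by linarith [dist_triangle u a x₀]), hu,
          notMem_of_dist_lt_infDist (by rw [dist_comm]; linarith)⟩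
        v ⟨mem_closedBall.2 (by linarith [dist_triangle v b x₀]), hv,
          notMem_of_dist_lt_infDist (by rw [dist_comm]; linarith)⟩
  rw [mem_closedBall] at hu hv
  have hmin := min_dist_le_sub_of_near_midpoint (ρ := ρ) hxab hθ hD hD' (by nlinarith)
    (by rw [← mul_assoc]; exact hρr.le) hu hv huv
  have hball {p q : X} (h : dist p q ≤ 2 * (M / 4 * ρ)) : p ∈ ball q (M * ρ) := by
    rw [mem_ball]; linarith [mul_pos hM hρ]
  have hαρ : α * ρ ≤ ρ / 2 := by nlinarith
  refine ⟨ρ, ⟨hρ, by linarith⟩, ?_⟩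
  rcases min_le_iff.1 hmin with h | h
  · obtain ⟨y, hy, hyb, hyu⟩ := exists_mem_ball_dist_add_half_le (p := b) (hxab ▸ h) hρ
    exact ⟨y, hy, u, ⟨huA, hball hu⟩, b, ⟨hb.1, mem_ball_self (by positivity)⟩,
      by linarith, by linarith⟩
  · obtain ⟨y, hy, hya, hyv⟩ := exists_mem_ball_dist_add_half_le (p := a) h hρ
    exact ⟨y, hy, a, ⟨ha.1, mem_ball_self (by positivity)⟩, v, ⟨hvB, hball hv⟩,
      by linarith, by linarith⟩

end InnerProductSpace

theorem stmt15_general {X : Type*} [NormedAddCommGroup X] [InnerProductSpace ℝ X] [CompleteSpace X]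
    {A B : Set X} (hA : IsClosed A) (hB : IsClosed B) {xbar : X}
    (hLT : PropLT A B xbar) : PropP A B xbar := by
  obtain ⟨ε₀, hε₀, θ, hθ, hdesc⟩ := hLT.exists_hasDescent
  set α := min (θ / 32) (1 / 4)
  set ε := min (ε₀ / 2) ((θ / 32) ^ 2)
  have hα : 0 < α := lt_min (by positivity) (by norm_num)
  have hε : 0 < ε := lt_min (by positivity) (by positivity)
  have hθM : 32 ≤ θ * (α + 1 / √ε) := by
    have hsqrt : √ε ≤ θ / 32 :=
      (Real.sqrt_le_sqrt (min_le_right _ _)).trans_eq (Real.sqrt_sq (by positivity))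
    have : 32 ≤ θ / √ε := by rw [le_div_iff₀ (Real.sqrt_pos.2 hε)]; linarith
    rw [mul_add, mul_one_div]
    linarith [mul_pos hθ hα]
  have hε₀ : ε ≤ ε₀ / 2 := min_le_left _ _
  refine propP_of_forall_exists_hasCloserPoint hα ((min_le_right _ _).trans_lt (by norm_num)) hε
    fun a ⟨ha, ha₀⟩ b ⟨hb, hb₀⟩ x hxab δ hδ => ?_
  rw [mem_ball] at ha₀ hb₀
  rcases le_or_gt (2 * α * dist x a) (dist x (midpoint ℝ a b)) with hfar | hnear
  · exact exists_hasCloserPoint_of_le_dist_midpoint ha.1 hb.1 (fun h => ha.2 (h ▸ hb.1)) hxab hα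
      ((min_le_right _ _).trans (by norm_num)) (by positivity) hfar hδ
  · exact exists_hasCloserPoint_of_dist_midpoint_lt hA hB hθ (min_le_left _ _) (min_le_right _ _)
      hθM hdesc ha hb (by linarith) (by linarith) hxab hnear hδ

theorem stmt15 {X : Type*} [NormedAddCommGroup X] [InnerProductSpace ℝ X] [CompleteSpace X]
    {A B : Set X} (hA : IsClosed A) (hB : IsClosed B) {xbar : X} (hx : xbar ∈ A ∩ B)
    (hLT : PropLT A B xbar) : PropP A B xbar :=
  stmt15_general hA hB hLT
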